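/- For every s ∈ S and every 1 ≤ n ≤ N+1, the incentivized value function satisfies V_n(s) = V̄_n(s) + (N+1−n)·ε; that is, under the cost-of-control incentives the agent's value function is shifted from the uncontrolled value function by exactly (N+1−n)·ε at each stage n. -/
import Mathlib


section

variable {S A : Type} [Fintype S] [Fintype A] [DecidableEq S] [DecidableEq A]

/-- Uncontrolled value function, indexed by the number `m` of remaining stages:
`Vbar R P avail hne m s = V̄_{N+1-m}(s)`; in particular `Vbar ... 0 = V̄_{N+1} = 0`. -/
noncomputable def Vbar (R : S → A → ℝ) (P : S → A → S → ℝ) (avail : S → Finset A)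
    (hne : ∀ s, (avail s).Nonempty) : ℕ → S → ℝ
  | 0 => fun _ => 0
  | m + 1 => fun s =>
      (avail s).sup' (hne s) fun a => R s a + ∑ s' : S, P s a s' * Vbar R P avail hne m s'

/-- Uncontrolled Q-function at stage `n` (for a horizon `N`):
`Qbar ... N n s a = Q̄_n(s,a) = R(s,a) + Σ_{s'} P(s,a,s')·V̄_{n+1}(s')`. -/
noncomputable def Qbar (R : S → A → ℝ) (P : S → A → S → ℝ) (avail : S → Finset A)
    (hne : ∀ s, (avail s).Nonempty) (N n : ℕ) (s : S) (a : A) : ℝ :=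
  R s a + ∑ s' : S, P s a s' * Vbar R P avail hne (N - n) s'

/-- The cost-of-control incentives: at stage `n`, the designated action `astar n s` receives
`V̄_n(s) − Q̄_n(s,a) + ε` and every other action receives `0`. -/
noncomputable def gammaInc (R : S → A → ℝ) (P : S → A → S → ℝ) (avail : S → Finset A)
    (hne : ∀ s, (avail s).Nonempty) (N : ℕ) (astar : ℕ → S → A) (ε : ℝ)
    (n : ℕ) (s : S) (a : A) : ℝ :=
  if a = astar n s then
    Vbar R P avail hne (N + 1 - n) s - Qbar R P avail hne N n s a + ε
  else 0

/-- Incentivized value function, indexed by the number `m` of remaining stages: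
`Vinc ... m s = V_{N+1-m}(s)`; the stage of the decision taken with `m+1` stages remaining
is `n = N - m`. -/
noncomputable def Vinc (R : S → A → ℝ) (P : S → A → S → ℝ) (avail : S → Finset A)
    (hne : ∀ s, (avail s).Nonempty) (N : ℕ) (astar : ℕ → S → A) (ε : ℝ) :
    ℕ → S → ℝ
  | 0 => fun _ => 0
  | m + 1 => fun s =>
      (avail s).sup' (hne s) fun a =>
        R s a + gammaInc R P avail hne N astar ε (N - m) s a +
          ∑ s' : S, P s a s' * Vinc R P avail hne N astar ε m s'

/-- Incentivized Q-function at stage `n`: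
`Qinc ... n s a = Q_n(s,a) = R(s,a) + γ_n(s,a) + Σ_{s'} P(s,a,s')·V_{n+1}(s')`. -/
noncomputable def Qinc (R : S → A → ℝ) (P : S → A → S → ℝ) (avail : S → Finset A)
    (hne : ∀ s, (avail s).Nonempty) (N : ℕ) (astar : ℕ → S → A) (ε : ℝ)
    (n : ℕ) (s : S) (a : A) : ℝ :=
  R s a + gammaInc R P avail hne N astar ε n s a +
    ∑ s' : S, P s a s' * Vinc R P avail hne N astar ε (N - n) s'

lemma incentivized_value_shift_aux
    (R : S → A → ℝ) (P : S → A → S → ℝ) (avail : S → Finset A)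
    (hne : ∀ s, (avail s).Nonempty)
    (hP1 : ∀ s, ∀ a ∈ avail s, (∑ s' : S, P s a s') = 1)
    (N : ℕ) (ε : ℝ) (hε : 0 ≤ ε)
    (astar : ℕ → S → A)
    (hastar : ∀ n s, 1 ≤ n → n ≤ N → astar n s ∈ avail s) :
    ∀ m, m ≤ N → ∀ s : S,
      Vinc R P avail hne N astar ε m s =
        Vbar R P avail hne m s + (m : ℝ) * ε := by
  intro m
  induction m with
  | zero => intro _ s; simp [Vinc, Vbar]
  | succ m ih =>
    intro hm s
    have hm' : m ≤ N := Nat.le_of_succ_le hm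
    have hNm : N - (N - m) = m := by omega
    have hN1m : N + 1 - (N - m) = m + 1 := by omega
    have h1 : 1 ≤ N - m := by omega
    have h2 : N - m ≤ N := by omega
    have hVbar : Vbar R P avail hne (m + 1) s =
        (avail s).sup' (hne s) fun a => Qbar R P avail hne N (N - m) s a := by
      simp only [Vbar, Qbar, hNm]
    have key : ∀ a ∈ avail s,
        R s a + gammaInc R P avail hne N astar ε (N - m) s a +
          ∑ s' : S, P s a s' * Vinc R P avail hne N astar ε m s' =
        (if a = astar (N - m) s then Vbar R P avail hne (m + 1) s + ε
          else Qbar R P avail hne N (N - m) s a) + (m : ℝ) * ε := by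
      intro a ha
      have hsum : ∑ s' : S, P s a s' * Vinc R P avail hne N astar ε m s' =
          (∑ s' : S, P s a s' * Vbar R P avail hne m s') + (m : ℝ) * ε := by
        have : ∀ s', P s a s' * Vinc R P avail hne N astar ε m s' =
            P s a s' * Vbar R P avail hne m s' + P s a s' * ((m : ℝ) * ε) := by
          intro s'; rw [ih hm' s']; ring
        simp only [this, Finset.sum_add_distrib, ← Finset.sum_mul, hP1 s a ha]
        ring
      rw [hsum, gammaInc]
      split_ifs with h
      · simp only [Qbar, hNm, hN1m]; ring
      · simp only [Qbar, hNm]; ring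
    show (avail s).sup' (hne s) _ = _
    apply le_antisymm
    · apply Finset.sup'_le
      intro a ha
      rw [key a ha]
      split_ifs with h
      · push_cast; nlinarith
      · have hle : Qbar R P avail hne N (N - m) s a ≤ Vbar R P avail hne (m + 1) s := by
          rw [hVbar]; exact Finset.le_sup' _ ha
        push_cast; nlinarith
    · have hmem := hastar (N - m) s h1 h2
      calc Vbar R P avail hne (m + 1) s + ((m + 1 : ℕ) : ℝ) * ε
          = R s (astar (N - m) s) +
              gammaInc R P avail hne N astar ε (N - m) s (astar (N - m) s) +
              ∑ s' : S, P s (astar (N - m) s) s' * Vinc R P avail hne N astar ε m s' := by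
            rw [key _ hmem, if_pos rfl]; push_cast; ring
        _ ≤ _ := Finset.le_sup' (fun a =>
              R s a + gammaInc R P avail hne N astar ε (N - m) s a +
                ∑ s' : S, P s a s' * Vinc R P avail hne N astar ε m s') hmem

/-- Under the cost-of-control incentives, the agent's value function is shifted from the
uncontrolled value function by exactly `(N+1−n)·ε` at each stage `1 ≤ n ≤ N+1`:
`V_n(s) = V̄_n(s) + (N+1−n)·ε` (recall `V_n = Vinc ... (N+1-n)` and `V̄_n = Vbar ... (N+1-n)`). -/
theorem incentivized_value_shift
    (R : S → A → ℝ) (P : S → A → S → ℝ) (avail : S → Finset A)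
    (hne : ∀ s, (avail s).Nonempty)
    (hP0 : ∀ s a s', 0 ≤ P s a s')
    (hP1 : ∀ s, ∀ a ∈ avail s, (∑ s' : S, P s a s') = 1)
    (N : ℕ) (hN : 1 ≤ N) (ε : ℝ) (hε : 0 ≤ ε)
    (astar : ℕ → S → A)
    (hastar : ∀ n s, 1 ≤ n → n ≤ N → astar n s ∈ avail s) :
    ∀ n, 1 ≤ n → n ≤ N + 1 → ∀ s : S,
      Vinc R P avail hne N astar ε (N + 1 - n) s =
        Vbar R P avail hne (N + 1 - n) s + ((N + 1 - n : ℕ) : ℝ) * ε := by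
  intro n h1 h2 s
  exact incentivized_value_shift_aux R P avail hne hP1 N ε hε astar hastar
    (N + 1 - n) (by omega) s

end
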